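/- (Antiferromagnetic penalty Hamiltonian spectrum) Let n ≥ 3 and define the (n−1)-qubit operator H^{pen}_{antiferro} = Σ_{j=1}^{n−2} Z_{j+1} Z_j + Z_1 + (−1)^{n−1} Z_{n−1}. Then every antiferromagnetic codeword state |a_j⟩ (j = 1,…,n) is an eigenvector of H^{pen}_{antiferro} with eigenvalue −(n−2); this is the least eigenvalue of H^{pen}_{antiferro}; the eigenspace for eigenvalue −(n−2) is exactly span{|a_1⟩,…,|a_n⟩}; and every other eigenvalue of H^{pen}_{antiferro} is at least −(n−2) + 4 (i.e., the spectral gap between the ground and first excited energy levels equals 4). -/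
import Mathlib


open Matrix

/-- The single-qubit Pauli `X` matrix `[[0,1],[1,0]]`, with basis indexed by `Bool`
(`false = |0⟩`, `true = |1⟩`). -/
def pauliX : Matrix Bool Bool ℂ := fun s t => if s = t then 0 else 1

/-- The single-qubit Pauli `Y` matrix `[[0,-i],[i,0]]`. -/
def pauliY : Matrix Bool Bool ℂ :=
  fun s t => if s = t then 0 else if s then Complex.I else -Complex.I

/-- The single-qubit Pauli `Z` matrix `[[1,0],[0,-1]]`. -/
def pauliZ : Matrix Bool Bool ℂ := fun s t => if s = t then (if s then -1 else 1) else 0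

/-- The single-qubit number operator `n̂ = (I - Z)/2`. -/
noncomputable def numOp : Matrix Bool Bool ℂ := (2⁻¹ : ℂ) • (1 - pauliZ)

/-- The `m`-fold tensor (Kronecker) product `f 0 ⊗ f 1 ⊗ ⋯ ⊗ f (m-1)` of single-qubit
operators, as a matrix on `(ℂ²)^{⊗ m}` whose computational basis is indexed by bitstrings
`Fin m → Bool`. -/
def tensorOp {m : ℕ} (f : Fin m → Matrix Bool Bool ℂ) :
    Matrix (Fin m → Bool) (Fin m → Bool) ℂ :=
  fun s t => ∏ i, f i (s i) (t i)

/-- The single-qubit operator `M` acting on qubit `j` (0-indexed), tensored with the identity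
on all other qubits. -/
def siteOp {m : ℕ} (M : Matrix Bool Bool ℂ) (j : Fin m) :
    Matrix (Fin m → Bool) (Fin m → Bool) ℂ :=
  tensorOp fun i => if i = j then M else 1

/-- The computational basis vector labeled by the bitstring `w`. -/
def basisVec {m : ℕ} (w : Fin m → Bool) : (Fin m → Bool) → ℂ := fun s => if s = w then 1 else 0
/-- The antiferromagnetic codeword `a_j` on `n-1` qubits: `a_1` is the alternating string
(bit `i`, 1-indexed, equals 0 for odd `i` and 1 for even `i`), and `a_j` is obtained from
`a_{j-1}` by flipping bit `j-1`; equivalently, for `j : Fin n` (representing the 1-indexed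
integer `j+1`), the lowest `j` bits of the alternating string are flipped. -/
def antiferroWord (n : ℕ) (j : Fin n) : Fin (n - 1) → Bool :=
  fun i => xor (decide ((i : ℕ) < (j : ℕ))) (decide ((i : ℕ) % 2 = 1))

/-- The antiferromagnetic penalty Hamiltonian
`H^{pen}_{antiferro} = Σ_{j=1}^{n-2} Z_{j+1} Z_j + Z_1 + (-1)^{n-1} Z_{n-1}` on `n-1`
qubits. -/
noncomputable def antiferroPen (n : ℕ) (hn : 3 ≤ n) :
    Matrix (Fin (n - 1) → Bool) (Fin (n - 1) → Bool) ℂ :=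
  (∑ j : Fin (n - 2),
      siteOp pauliZ (⟨(j : ℕ) + 1, by have := j.isLt; omega⟩ : Fin (n - 1)) *
        siteOp pauliZ ⟨(j : ℕ), by have := j.isLt; omega⟩) +
    siteOp pauliZ (⟨0, by omega⟩ : Fin (n - 1)) +
    (-1 : ℂ) ^ (n - 1) • siteOp pauliZ (⟨n - 2, by omega⟩ : Fin (n - 1))

def zC : Bool → ℂ := fun b => if b then -1 else 1
def zI : Bool → ℤ := fun b => if b then -1 else 1

lemma zC_eq_int (b : Bool) : zC b = (zI b : ℂ) := by cases b <;> simp [zC, zI]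

lemma siteOp_eq_diagonal {m : ℕ} (j : Fin m) :
    siteOp pauliZ j = Matrix.diagonal (fun s => zC (s j)) := by
  ext s t
  by_cases h : s = t
  · subst h
    simp only [siteOp, tensorOp, Matrix.diagonal_apply_eq]
    rw [Finset.prod_eq_single j]
    · cases hs : s j <;> simp [pauliZ, zC, hs]
    · intro b _ hb; simp [hb, Matrix.one_apply]
    · simp
  · rw [Matrix.diagonal_apply_ne _ h]
    obtain ⟨i, hi⟩ : ∃ i, s i ≠ t i := by
      by_contra hc; push_neg at hc; exact h (funext hc)
    apply Finset.prod_eq_zero (Finset.mem_univ i)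
    by_cases hij : i = j
    · simp only [hij, if_pos rfl]
      simp [pauliZ, hij ▸ hi]
    · simp [hij, Matrix.one_apply, hi]

lemma diagonal_sum' {ι κ : Type*} [Fintype ι] [DecidableEq κ] (d : ι → κ → ℂ) :
    ∑ i : ι, Matrix.diagonal (d i) = Matrix.diagonal (fun a => ∑ i, d i a) := by
  ext s t
  by_cases h : s = t
  · subst h; simp [Matrix.sum_apply]
  · simp [Matrix.sum_apply, Matrix.diagonal_apply_ne _ h]

noncomputable def Dfun (N : ℕ) : (Fin (N+2) → Bool) → ℂ := fun w =>
  (∑ j : Fin (N+1), zC (w ⟨(j:ℕ)+1, by omega⟩) * zC (w ⟨(j:ℕ), by omega⟩))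
  + zC (w ⟨0, by omega⟩) + (-1:ℂ)^(N+2) * zC (w ⟨N+1, by omega⟩)

lemma antiferroPen_eq (N : ℕ) (hn : 3 ≤ N+3) :
    antiferroPen (N+3) hn = Matrix.diagonal (Dfun N) := by
  show _ = Matrix.diagonal (Dfun N)
  unfold antiferroPen
  simp_rw [siteOp_eq_diagonal, Matrix.diagonal_mul_diagonal]
  rw [diagonal_sum']
  rw [← Matrix.diagonal_smul, Matrix.diagonal_add, Matrix.diagonal_add]
  congr 1

def extW (N : ℕ) (w : Fin (N+2) → Bool) : ℕ → Bool := fun i =>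
  if h : 1 ≤ i ∧ i ≤ N + 2 then w ⟨i - 1, by omega⟩
  else if i = 0 then false
  else decide ((N + 2) % 2 = 1)

def eqP (N : ℕ) (w : Fin (N+2) → Bool) : Finset ℕ :=
  (Finset.range (N+3)).filter (fun k => extW N w k = extW N w (k+1))

def Sfun (N : ℕ) (w : Fin (N+2) → Bool) : ℤ :=
  ∑ k ∈ Finset.range (N+3), zI (extW N w k) * zI (extW N w (k+1))

lemma extW_zero (N : ℕ) (w : Fin (N+2) → Bool) : extW N w 0 = false := by
  simp [extW]

lemma extW_mid (N : ℕ) (w : Fin (N+2) → Bool) (i : ℕ) (h1 : 1 ≤ i) (h2 : i ≤ N+2) :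
    extW N w i = w ⟨i - 1, by omega⟩ := by
  simp [extW, h1, h2]

lemma extW_top (N : ℕ) (w : Fin (N+2) → Bool) : extW N w (N+3) = decide ((N+2) % 2 = 1) := by
  have : ¬ (1 ≤ N+3 ∧ N+3 ≤ N+2) := by omega
  simp [extW, this]

lemma zI_mul_self (b : Bool) : zI b * zI b = 1 := by cases b <;> simp [zI]

lemma zI_eq_ite (a b : Bool) : zI a * zI b = if a = b then 1 else -1 := by
  cases a <;> cases b <;> simp [zI]

lemma zI_decide_mod (q : ℕ) : zI (decide (q % 2 = 1)) = (-1 : ℤ)^q := by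
  rcases Nat.even_or_odd q with h | h
  · have h1 : decide (q % 2 = 1) = false := by
      simp only [decide_eq_false_iff_not]
      rcases h with ⟨c, hc⟩; omega
    rw [h1, h.neg_one_pow]; rfl
  · have h1 : decide (q % 2 = 1) = true := by simp [Nat.odd_iff.mp h]
    rw [h1, h.neg_one_pow]; rfl

lemma Sfun_eq_card (N : ℕ) (w : Fin (N+2) → Bool) :
    Sfun N w = 2 * (eqP N w).card - (N + 3) := by
  unfold Sfun eqP
  simp_rw [zI_eq_ite]
  rw [Finset.sum_ite, Finset.sum_const, Finset.sum_const]
  have hcard := Finset.card_filter_add_card_filter_not (s := Finset.range (N+3))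
    (p := fun k => extW N w k = extW N w (k+1))
  rw [Finset.card_range] at hcard
  simp only [nsmul_eq_mul, mul_one, mul_neg_one]
  set a := ((Finset.range (N+3)).filter (fun k => extW N w k = extW N w (k+1))).card
  set b := ((Finset.range (N+3)).filter (fun a => ¬ extW N w a = extW N w (a+1))).card
  have : (a : ℤ) + b = N + 3 := by exact_mod_cast hcard
  linarith

lemma telescope (W : ℕ → Bool) (M : ℕ) :
    ∏ k ∈ Finset.range M, (zI (W k) * zI (W (k+1))) = zI (W 0) * zI (W M) := by
  induction M with
  | zero => simp [zI_mul_self]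
  | succ M ih =>
    rw [Finset.prod_range_succ, ih]
    have : zI (W 0) * zI (W M) * (zI (W M) * zI (W (M+1)))
        = zI (W 0) * (zI (W M) * zI (W M)) * zI (W (M+1)) := by ring
    rw [this, zI_mul_self]
    ring

lemma eqP_card_odd (N : ℕ) (w : Fin (N+2) → Bool) : (eqP N w).card % 2 = 1 := by
  have htel := telescope (extW N w) (N+3)
  rw [extW_zero, extW_top] at htel
  have hz : zI false = 1 := rfl
  rw [hz, one_mul, zI_decide_mod] at htel
  -- htel : ∏ k in range (N+3), zI .. * zI .. = (-1)^(N+2)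
  have hprod : ∏ k ∈ Finset.range (N+3), (zI (extW N w k) * zI (extW N w (k+1)))
      = (-1 : ℤ)^((Finset.range (N+3)).filter (fun k => ¬ extW N w k = extW N w (k+1))).card := by
    simp_rw [zI_eq_ite]
    rw [Finset.prod_ite, Finset.prod_const, Finset.prod_const, one_pow, one_mul]
  rw [hprod] at htel
  have hcard := Finset.card_filter_add_card_filter_not (s := Finset.range (N+3))
    (p := fun k => extW N w k = extW N w (k+1))
  rw [Finset.card_range] at hcard
  set a := ((Finset.range (N+3)).filter (fun k => extW N w k = extW N w (k+1))).card with ha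
  set b := ((Finset.range (N+3)).filter (fun a => ¬ extW N w a = extW N w (a+1))).card with hb
  have hone : ((-1 : ℤ))^(b + (N+2)) = 1 := by
    rw [pow_add, htel, ← pow_add]
    exact Even.neg_one_pow ⟨N+2, by ring⟩
  have heven : Even (b + (N+2)) := by
    by_contra hodd
    rw [Nat.not_even_iff_odd] at hodd
    rw [hodd.neg_one_pow] at hone
    norm_num at hone
  show a % 2 = 1
  rcases heven with ⟨c, hc⟩
  omega

lemma decide_succ_mod (i : ℕ) : decide ((i+1) % 2 = 1) = !decide (i % 2 = 1) := by
  by_cases hc : i % 2 = 1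
  · have h2 : ¬((i+1) % 2 = 1) := by omega
    simp [hc, h2]
  · have h2 : (i+1) % 2 = 1 := by omega
    simp [hc, h2]

lemma decide_pred_mod (i : ℕ) (hi : 1 ≤ i) : decide ((i-1) % 2 = 1) = !decide (i % 2 = 1) := by
  by_cases hc : i % 2 = 1
  · have h2 : ¬((i-1) % 2 = 1) := by omega
    simp [hc, h2]
  · have h2 : (i-1) % 2 = 1 := by omega
    simp [hc, h2]

lemma xor_step (k i : ℕ) :
    (xor (decide (i % 2 = 1)) (decide (k < i))
      = xor (decide ((i+1) % 2 = 1)) (decide (k < i+1))) ↔ i = k := by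
  rw [decide_succ_mod]
  constructor
  · intro he
    by_contra hne
    have hb : decide (k < i+1) = decide (k < i) := by
      by_cases h1 : k < i
      · simp [h1, Nat.lt_succ_of_lt h1]
      · have h2 : ¬ k < i + 1 := by omega
        simp [h1, h2]
    rw [hb] at he
    cases (decide (i % 2 = 1)) <;> cases (decide (k < i)) <;> simp_all
  · rintro rfl
    have h1 : decide (i < i) = false := by simp
    have h2 : decide (i < i+1) = true := by simp
    rw [h1, h2]
    cases (decide (i % 2 = 1)) <;> rfl

lemma eqP_of_formula (N : ℕ) (w : Fin (N+2) → Bool) (k : ℕ) (hk : k < N+3)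
    (h : ∀ i ≤ N+3, extW N w i = xor (decide (i % 2 = 1)) (decide (k < i))) :
    eqP N w = {k} := by
  ext i
  simp only [eqP, Finset.mem_filter, Finset.mem_range, Finset.mem_singleton]
  constructor
  · rintro ⟨hi, he⟩
    rw [h i (by omega), h (i+1) (by omega)] at he
    exact (xor_step k i).mp he
  · rintro rfl
    refine ⟨hk, ?_⟩
    rw [h i (by omega), h (i+1) (by omega)]
    exact (xor_step i i).mpr rfl

lemma formula_antiferro (N : ℕ) (j : Fin (N+3)) :
    ∀ i ≤ N+3, extW N (antiferroWord (N+3) j) i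
      = xor (decide (i % 2 = 1)) (decide ((j:ℕ) < i)) := by
  intro i hi
  rcases Nat.eq_zero_or_pos i with rfl | hpos
  · rw [extW_zero]; simp
  · rcases Nat.lt_or_ge i (N+3) with hlt | hge
    · rw [extW_mid N _ i hpos (by omega)]
      show xor (decide ((i-1:ℕ) < (j:ℕ))) (decide ((i-1) % 2 = 1)) = _
      have e1 : decide ((i-1:ℕ) < (j:ℕ)) = !decide ((j:ℕ) < i) := by
        by_cases hc : (j:ℕ) < i
        · have : ¬ (i-1 < (j:ℕ)) := by omega
          simp [hc, this]
        · have : i-1 < (j:ℕ) := by omega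
          simp [hc, this]
      rw [e1, decide_pred_mod i hpos]
      cases decide ((j:ℕ) < i) <;> cases decide (i % 2 = 1) <;> rfl
    · have hieq : i = N+3 := by omega
      subst hieq
      rw [extW_top]
      have hj : decide ((j:ℕ) < N+3) = true := by simp [j.isLt]
      rw [hj]
      have : decide ((N+2) % 2 = 1) = !decide ((N+3) % 2 = 1) :=
        decide_pred_mod (N+3) (by omega)
      rw [this]
      cases decide ((N+3) % 2 = 1) <;> rfl

lemma formula_of_eqP (N : ℕ) (w : Fin (N+2) → Bool) (k : ℕ) (hk : eqP N w = {k}) :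
    ∀ i ≤ N+3, extW N w i = xor (decide (i % 2 = 1)) (decide (k < i)) := by
  have hkmem : k ∈ eqP N w := hk ▸ Finset.mem_singleton_self k
  have hkr : k < N+3 ∧ extW N w k = extW N w (k+1) := by
    simpa [eqP] using hkmem
  have hne : ∀ i < N+3, i ≠ k → extW N w (i+1) = !extW N w i := by
    intro i hi hik
    have hni : i ∉ eqP N w := by rw [hk]; simpa using hik
    simp only [eqP, Finset.mem_filter, Finset.mem_range, not_and] at hni
    have hnee := hni hi
    cases h1 : extW N w i <;> cases h2 : extW N w (i+1) <;> simp_all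
  intro i hi
  induction i with
  | zero => rw [extW_zero]; simp
  | succ i ih =>
    have hi' : i < N+3 := by omega
    have hih := ih (by omega)
    by_cases hik : i = k
    · subst hik
      rw [← hkr.2, hih]
      exact (xor_step i i).mpr rfl
    · rw [hne i hi' hik, hih]
      have hx : ¬ (xor (decide (i % 2 = 1)) (decide (k < i))
          = xor (decide ((i+1) % 2 = 1)) (decide (k < i+1))) :=
        fun he => hik ((xor_step k i).mp he)
      cases hX : xor (decide (i % 2 = 1)) (decide (k < i)) <;>
        cases hY : xor (decide ((i+1) % 2 = 1)) (decide (k < i+1)) <;> simp_all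

lemma eq_antiferro_of_eqP (N : ℕ) (w : Fin (N+2) → Bool) (k : ℕ) (hk : eqP N w = {k}) :
    ∃ j : Fin (N+3), w = antiferroWord (N+3) j := by
  have hkmem : k ∈ eqP N w := hk ▸ Finset.mem_singleton_self k
  have hklt : k < N+3 := by
    have := (Finset.mem_filter.mp hkmem).1
    simpa using this
  refine ⟨⟨k, hklt⟩, ?_⟩
  funext i
  have hi2 := i.isLt
  have hf := formula_of_eqP N w k hk ((i:ℕ)+1) (by omega)
  rw [extW_mid N w ((i:ℕ)+1) (by omega) (by omega)] at hf
  have hwi : w ⟨(i:ℕ)+1-1, by omega⟩ = w i := by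
    congr 1
  rw [hwi] at hf
  rw [hf]
  show _ = xor (decide ((i:ℕ) < k)) (decide ((i:ℕ) % 2 = 1))
  have e2 : decide (k < (i:ℕ)+1) = !decide ((i:ℕ) < k) := by
    by_cases hc : (i:ℕ) < k
    · have : ¬ k < (i:ℕ)+1 := by omega
      simp [hc, this]
    · have : k < (i:ℕ)+1 ∨ k = (i:ℕ) := by omega
      rcases this with h | h
      · simp [hc, h]
      · subst h; simp
  rw [decide_succ_mod, e2]
  cases decide ((i:ℕ) < k) <;> cases decide ((i:ℕ) % 2 = 1) <;> rfl

lemma Dfun_eq_Sfun (N : ℕ) (w : Fin (N+2) → Bool) : Dfun N w = ((Sfun N w : ℤ) : ℂ) := by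
  have h1 : ∀ (k : ℕ) (hk : k < N+2), w ⟨k, hk⟩ = extW N w (k+1) := by
    intro k hk
    rw [extW_mid N w (k+1) (by omega) (by omega)]
    exact congrArg w (Fin.ext (by simp))
  unfold Dfun Sfun
  rw [Finset.sum_range_succ, Finset.sum_range_succ']
  push_cast
  rw [extW_zero, extW_top, zI_decide_mod]
  simp only [zC_eq_int]
  simp_rw [h1]
  rw [Fin.sum_univ_eq_sum_range
    (fun k => ((zI (extW N w (k+1+1)) : ℂ) * (zI (extW N w (k+1)) : ℂ))) (N+1)]
  push_cast
  have hzf : zI false = 1 := rfl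
  rw [hzf]
  rw [Finset.sum_congr rfl
    (fun x _ => mul_comm ((zI (extW N w (x+1+1)) : ℂ)) ((zI (extW N w (x+1)) : ℂ)))]
  ring

lemma Sfun_antiferro (N : ℕ) (j : Fin (N+3)) :
    Sfun N (antiferroWord (N+3) j) = 2 - (N+3 : ℤ) := by
  rw [Sfun_eq_card, eqP_of_formula N _ (j:ℕ) j.isLt (formula_antiferro N j)]
  simp

def wGap (N : ℕ) : Fin (N+2) → Bool := fun i => if (i:ℕ) < 2 then false else decide ((i:ℕ) % 2 = 1)

lemma extW_wGap (N : ℕ) : ∀ i ≤ N+3, extW N (wGap N) i = decide (3 ≤ i ∧ i % 2 = 0) := by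
  intro i hi
  rcases Nat.eq_zero_or_pos i with rfl | hpos
  · rw [extW_zero]
    symm
    rw [decide_eq_false_iff_not]
    omega
  · rcases Nat.lt_or_ge i (N+3) with hlt | hge
    · rw [extW_mid N _ i hpos (by omega)]
      show (if (i-1:ℕ) < 2 then false else decide ((i-1:ℕ) % 2 = 1)) = _
      by_cases hc : i - 1 < 2
      · rw [if_pos hc]
        symm
        rw [decide_eq_false_iff_not]
        omega
      · rw [if_neg hc, decide_eq_decide]
        omega
    · have hieq : i = N+3 := by omega
      subst hieq
      rw [extW_top, decide_eq_decide]
      omega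

lemma eqP_wGap (N : ℕ) : eqP N (wGap N) = {0, 1, 2} := by
  ext i
  simp only [eqP, Finset.mem_filter, Finset.mem_range, Finset.mem_insert, Finset.mem_singleton]
  constructor
  · rintro ⟨hi, he⟩
    rw [extW_wGap N i (by omega), extW_wGap N (i+1) (by omega), decide_eq_decide] at he
    omega
  · intro hi
    have hi3 : i < 3 := by omega
    refine ⟨by omega, ?_⟩
    rw [extW_wGap N i (by omega), extW_wGap N (i+1) (by omega), decide_eq_decide]
    omega

lemma Sfun_wGap (N : ℕ) : Sfun N (wGap N) = 2 * 3 - (N+3 : ℤ) := by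
  rw [Sfun_eq_card, eqP_wGap]
  norm_num

lemma diag_mulVec_basis {m : ℕ} (D : (Fin m → Bool) → ℂ) (a : Fin m → Bool) :
    (Matrix.diagonal D) *ᵥ basisVec a = D a • basisVec a := by
  funext s
  rw [Matrix.mulVec_diagonal]
  simp only [basisVec, Pi.smul_apply, smul_eq_mul]
  by_cases h : s = a
  · subst h; simp
  · simp [h]

lemma vec_decomp {m : ℕ} (v : (Fin m → Bool) → ℂ) :
    v = ∑ w : Fin m → Bool, v w • basisVec w := by
  funext s
  rw [Finset.sum_apply]
  simp [basisVec]

/-- **Spectrum of the antiferromagnetic penalty Hamiltonian.** For `n ≥ 3`: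
every antiferromagnetic codeword state is an eigenvector with eigenvalue `-(n-2)`; every
eigenvalue is either `-(n-2)` or real and at least `-(n-2)+4` (in particular `-(n-2)` is the
least eigenvalue); the `-(n-2)`-eigenspace is exactly the span of the antiferromagnetic
codeword states; and `-(n-2)+4` is attained, so the spectral gap equals `4`. -/
theorem antiferro_penalty_spectrum (n : ℕ) (hn : 3 ≤ n) :
    (∀ j : Fin n,
        (antiferroPen n hn).mulVec (basisVec (antiferroWord n j)) =
          (-((n : ℂ) - 2)) • basisVec (antiferroWord n j)) ∧
      (∀ μ : ℂ,
        (∃ v : (Fin (n - 1) → Bool) → ℂ, v ≠ 0 ∧ (antiferroPen n hn).mulVec v = μ • v) →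
          μ = -((n : ℂ) - 2) ∨ ∃ r : ℝ, μ = (r : ℂ) ∧ -((n : ℝ) - 2) + 4 ≤ r) ∧
      ({v : (Fin (n - 1) → Bool) → ℂ | (antiferroPen n hn).mulVec v = (-((n : ℂ) - 2)) • v} =
        (Submodule.span ℂ (Set.range fun j : Fin n => basisVec (antiferroWord n j)) : Set _)) ∧
      (∃ v : (Fin (n - 1) → Bool) → ℂ, v ≠ 0 ∧
        (antiferroPen n hn).mulVec v = (-((n : ℂ) - 2) + 4) • v) := by
  obtain ⟨N, rfl⟩ : ∃ N, n = N + 3 := ⟨n - 3, by omega⟩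
  have hpen : antiferroPen (N+3) hn = Matrix.diagonal (Dfun N) := antiferroPen_eq N hn
  have hμ0 : (-(((N+3 : ℕ) : ℂ) - 2)) = ((2 - (N+3 : ℤ) : ℤ) : ℂ) := by push_cast; ring
  have hcode : ∀ j : Fin (N+3), Dfun N (antiferroWord (N+3) j) = -(((N+3 : ℕ) : ℂ) - 2) := by
    intro j
    rw [Dfun_eq_Sfun, Sfun_antiferro, hμ0]
  have hcle : ∀ w : Fin (N+2) → Bool, (eqP N w).card ≤ N+3 := by
    intro w
    calc (eqP N w).card ≤ (Finset.range (N+3)).card := Finset.card_filter_le _ _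
    _ = N+3 := Finset.card_range _
  have part1 : ∀ j : Fin (N+3),
      (antiferroPen (N+3) hn).mulVec (basisVec (antiferroWord (N+3) j)) =
        (-(((N+3 : ℕ) : ℂ) - 2)) • basisVec (antiferroWord (N+3) j) := by
    intro j
    rw [hpen]
    exact (diag_mulVec_basis (Dfun N) (antiferroWord (N+3) j)).trans (by rw [hcode j])
  refine ⟨part1, ?_, ?_, ?_⟩
  · rintro μ ⟨v, hv0, hv⟩
    rw [hpen] at hv
    obtain ⟨s, hs⟩ : ∃ s, v s ≠ 0 := Function.ne_iff.mp hv0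
    have h := congrFun hv s
    rw [Matrix.mulVec_diagonal] at h
    simp only [Pi.smul_apply, smul_eq_mul] at h
    have hμ : μ = Dfun N s := (mul_right_cancel₀ hs h).symm
    have hS := Sfun_eq_card N s
    have hodd := eqP_card_odd N s
    have hle := hcle s
    by_cases h1 : (eqP N s).card = 1
    · left
      rw [hμ, Dfun_eq_Sfun, hS, h1, hμ0]
      norm_num
    · right
      refine ⟨((Sfun N s : ℤ) : ℝ), ?_, ?_⟩
      · rw [hμ, Dfun_eq_Sfun]
        push_cast
        ring
      · have h3 : 3 ≤ (eqP N s).card := by omega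
        have hb : (3 - (N:ℤ)) ≤ Sfun N s := by
          rw [hS]
          push_cast
          omega
        have hb2 : ((3 - (N:ℤ) : ℤ) : ℝ) ≤ ((Sfun N s : ℤ) : ℝ) := by exact_mod_cast hb
        push_cast at hb2 ⊢
        linarith
  · ext v
    simp only [Set.mem_setOf_eq, SetLike.mem_coe]
    constructor
    · intro hv
      rw [hpen] at hv
      have hvw : ∀ w, v w ≠ 0 → Dfun N w = -(((N+3 : ℕ) : ℂ) - 2) := by
        intro w hw
        have h := congrFun hv w
        rw [Matrix.mulVec_diagonal] at h
        simp only [Pi.smul_apply, smul_eq_mul] at h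
        exact mul_right_cancel₀ hw h
      rw [vec_decomp v]
      apply Submodule.sum_mem
      intro w _
      by_cases hw : v w = 0
      · rw [hw, zero_smul]; exact Submodule.zero_mem _
      · apply Submodule.smul_mem
        apply Submodule.subset_span
        have hD := hvw w hw
        rw [Dfun_eq_Sfun, hμ0] at hD
        have hSw : Sfun N w = 2 - (N+3:ℤ) := by exact_mod_cast hD
        rw [Sfun_eq_card] at hSw
        have hc1 : (eqP N w).card = 1 := by omega
        obtain ⟨k, hk⟩ := Finset.card_eq_one.mp hc1
        obtain ⟨j, hj⟩ := eq_antiferro_of_eqP N w k hk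
        exact ⟨j, by rw [hj]⟩
    · intro hv
      induction hv using Submodule.span_induction with
      | mem x hx =>
        obtain ⟨j, rfl⟩ := hx
        exact part1 j
      | zero => simp
      | add x y _ _ hx hy => rw [Matrix.mulVec_add, hx, hy, smul_add]
      | smul c x _ hx => rw [Matrix.mulVec_smul, hx, smul_comm]
  · refine ⟨basisVec (wGap N), ?_, ?_⟩
    · intro h0
      have := congrFun h0 (wGap N)
      simp [basisVec] at this
    · rw [hpen]
      refine (diag_mulVec_basis (Dfun N) (wGap N)).trans ?_
      rw [Dfun_eq_Sfun, Sfun_wGap]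
      norm_num
      congr 1
      push_cast
      ring
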